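/- arXiv:2204.05689 — 2 statements merged into one kernel-verified Lean document; each statement's English description precedes it below -/
import Mathlib

section
/- Let X : V → [0,1], P row-stochastic on a finite set V, and Y(v) = sum_u P(v,u) X(u). Define W(X) = max_{u,v} |X(u) - X(v)| and γ(P) = min_{u≠v} sum_{w,z} min(P(u,w)P(v,z), P(u,z)P(v,w)). Then W(Y) ≤ (1 - γ(P)) · W(X). -/
/-- The oscillation seminorm `W(X) = max_{u,v} |X u - X v|`. -/
noncomputable def osc {V : Type*} [Fintype V] [Nonempty V] (X : V → ℝ) : ℝ :=
  Finset.univ.sup' Finset.univ_nonempty fun p : V × V => |X p.1 - X p.2|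

/-- If `Y v = ∑_u P v u * X u` with `P` row-stochastic on a finite set with at
least two elements, then `W(Y) ≤ (1 - γ(P)) W(X)` where
`γ(P) = min_{u ≠ v} ∑_{w,z} min(P u w * P v z, P u z * P v w)`. -/
theorem stmt4 {V : Type*} [Fintype V] [Nonempty V] (hcard : 2 ≤ Fintype.card V)
    (P : V → V → ℝ) (hP : ∀ u v, 0 ≤ P u v) (hPs : ∀ u, ∑ v, P u v = 1)
    (X : V → ℝ) (hX : ∀ v, X v ∈ Set.Icc (0:ℝ) 1)
    (Y : V → ℝ) (hY : ∀ v, Y v = ∑ u, P v u * X u) :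
    osc Y ≤
      (1 - sInf {s | ∃ u v : V, u ≠ v ∧
          s = ∑ w : V, ∑ z : V, min (P u w * P v z) (P u z * P v w)}) * osc X := by
  set S : Set ℝ := {s | ∃ u v : V, u ≠ v ∧
      s = ∑ w : V, ∑ z : V, min (P u w * P v z) (P u z * P v w)} with hS
  set γ := sInf S with hγ
  obtain ⟨u₀, v₀, huv₀⟩ := Fintype.exists_pair_of_one_lt_card (α := V) (by omega)
  have hSne : S.Nonempty := ⟨_, u₀, v₀, huv₀, rfl⟩
  have hbdd : BddBelow S := by
    refine ⟨0, fun s hs => ?_⟩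
    obtain ⟨u, v, _, rfl⟩ := hs
    refine Finset.sum_nonneg fun w _ => Finset.sum_nonneg fun z _ => ?_
    exact le_min (mul_nonneg (hP u w) (hP v z)) (mul_nonneg (hP u z) (hP v w))
  have hγle : ∀ u v : V, u ≠ v →
      γ ≤ ∑ w : V, ∑ z : V, min (P u w * P v z) (P u z * P v w) :=
    fun u v h => csInf_le hbdd ⟨u, v, h, rfl⟩
  have hone : ∀ u v : V, ∑ w : V, ∑ z : V, P u w * P v z = 1 := by
    intro u v
    have : ∀ w, ∑ z : V, P u w * P v z = P u w := by
      intro w; rw [← Finset.mul_sum, hPs v, mul_one]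
    simp_rw [this, hPs u]
  have hγ1 : γ ≤ 1 := by
    refine (hγle u₀ v₀ huv₀).trans ?_
    rw [← hone u₀ v₀]
    exact Finset.sum_le_sum fun w _ => Finset.sum_le_sum fun z _ => min_le_left _ _
  have hoscX : 0 ≤ osc X := by
    have a := Classical.arbitrary V
    have := Finset.le_sup' (fun p : V × V => |X p.1 - X p.2|)
      (Finset.mem_univ (a, a))
    simpa [osc] using this
  have hXle : ∀ w z : V, |X w - X z| ≤ osc X := fun w z =>
    Finset.le_sup' (fun p : V × V => |X p.1 - X p.2|) (Finset.mem_univ (w, z))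
  rw [osc]
  apply Finset.sup'_le
  rintro ⟨u, v⟩ -
  dsimp only
  rcases eq_or_ne u v with rfl | huv
  · simpa using mul_nonneg (by linarith) hoscX
  -- key computation
  have hexp : Y u - Y v = ∑ w : V, ∑ z : V, (P u w * P v z) * (X w - X z) := by
    have h1 : ∑ w : V, ∑ z : V, P u w * P v z * X w = Y u := by
      have : ∀ w, ∑ z : V, P u w * P v z * X w = P u w * X w := by
        intro w
        rw [show (∑ z : V, P u w * P v z * X w) = (P u w * X w) * ∑ z : V, P v z from by
          rw [Finset.mul_sum]; exact Finset.sum_congr rfl fun z _ => by ring]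
        rw [hPs v, mul_one]
      simp_rw [this, hY u]
    have h2 : ∑ w : V, ∑ z : V, P u w * P v z * X z = Y v := by
      have : ∀ w, ∑ z : V, P u w * P v z * X z = P u w * Y v := by
        intro w
        rw [show (∑ z : V, P u w * P v z * X z) = P u w * ∑ z : V, P v z * X z from by
          rw [Finset.mul_sum]; exact Finset.sum_congr rfl fun z _ => by ring]
        rw [hY v]
      simp_rw [this, ← Finset.sum_mul, hPs u, one_mul]
    simp_rw [mul_sub]
    rw [Finset.sum_congr rfl fun w _ => Finset.sum_sub_distrib _ _,
      Finset.sum_sub_distrib, h1, h2]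
  have hmzero : ∑ w : V, ∑ z : V, min (P u w * P v z) (P u z * P v w) * (X w - X z) = 0 := by
    have h : (∑ w : V, ∑ z : V, min (P u w * P v z) (P u z * P v w) * (X w - X z))
        = -∑ w : V, ∑ z : V, min (P u w * P v z) (P u z * P v w) * (X w - X z) := by
      calc (∑ w : V, ∑ z : V, min (P u w * P v z) (P u z * P v w) * (X w - X z))
          = ∑ z : V, ∑ w : V, min (P u w * P v z) (P u z * P v w) * (X w - X z) :=
            Finset.sum_comm
        _ = ∑ z : V, ∑ w : V, -(min (P u z * P v w) (P u w * P v z) * (X z - X w)) := by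
            refine Finset.sum_congr rfl fun z _ => Finset.sum_congr rfl fun w _ => ?_
            rw [min_comm (P u z * P v w)]; ring
        _ = -∑ w : V, ∑ z : V, min (P u w * P v z) (P u z * P v w) * (X w - X z) := by
            simp
    linarith
  have hkey : Y u - Y v = ∑ w : V, ∑ z : V,
      (P u w * P v z - min (P u w * P v z) (P u z * P v w)) * (X w - X z) := by
    simp_rw [sub_mul]
    rw [Finset.sum_congr rfl fun w _ => Finset.sum_sub_distrib _ _, Finset.sum_sub_distrib,
      hmzero, sub_zero, hexp]
  have hanneg : ∀ w z : V, 0 ≤ P u w * P v z - min (P u w * P v z) (P u z * P v w) :=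
    fun w z => sub_nonneg.2 (min_le_left _ _)
  calc |Y u - Y v|
      ≤ ∑ w : V, ∑ z : V,
        (P u w * P v z - min (P u w * P v z) (P u z * P v w)) * osc X := by
        rw [hkey]
        refine (Finset.abs_sum_le_sum_abs _ _).trans (Finset.sum_le_sum fun w _ =>
          (Finset.abs_sum_le_sum_abs _ _).trans (Finset.sum_le_sum fun z _ => ?_))
        rw [abs_mul, abs_of_nonneg (hanneg w z)]
        exact mul_le_mul_of_nonneg_left (hXle w z) (hanneg w z)
    _ = (1 - ∑ w : V, ∑ z : V, min (P u w * P v z) (P u z * P v w)) * osc X := by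
        simp_rw [← Finset.sum_mul]
        congr 1
        rw [Finset.sum_congr rfl fun w _ => Finset.sum_sub_distrib _ _, Finset.sum_sub_distrib,
          hone u v]
    _ ≤ (1 - γ) * osc X :=
        mul_le_mul_of_nonneg_right (by linarith [hγle u v huv]) hoscX
end

section
/- In the Markov chain (X(t), ω(t)) defined by X(t+1) = T(X(t), ω(t)) and ω(t+1) sampled from the product measure Π(·|X(t)), the sequence W(t) = W(X(t)) is a nonnegative bounded supermartingale with respect to the filtration generated by {X(s)}_{s≤t}: E[W(t+1) | F_t^X] ≤ (1 - E[γ(ω(t)) | F_t^X]) W(t) ≤ W(t). Consequently W(t) converges almost surely. -/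
open MeasureTheory Filter

/-- `P(v,u)(ω) = r_{u,v} ω_{u,v} / ∑_w r_{w,v} ω_{w,v}`. -/
noncomputable def Pm {V : Type*} [Fintype V] (r : V → V → ℝ) (ω : V → V → Bool)
    (v u : V) : ℝ :=
  (r u v * (if ω u v then (1:ℝ) else 0)) / ∑ w : V, r w v * (if ω w v then (1:ℝ) else 0)

/-- `γ(P) = min_{u ≠ v} ∑_{w,z} min(P u w P v z, P u z P v w)`. -/
noncomputable def ergCoeff {V : Type*} [Fintype V] (P : V → V → ℝ) : ℝ :=
  sInf {s | ∃ u v : V, u ≠ v ∧ s = ∑ w : V, ∑ z : V, min (P u w * P v z) (P u z * P v w)}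

/-- The product Bernoulli kernel `Π(ω | X) = ∏_e [ω_e p(|Δ_e X|) + (1-ω_e)(1-p(|Δ_e X|))]`. -/
noncomputable def PiK {V : Type*} [Fintype V] (p : ℝ → ℝ) (X : V → ℝ)
    (ω : V → V → Bool) : ℝ :=
  ∏ e : V × V, (if ω e.1 e.2 then p |X e.1 - X e.2| else 1 - p |X e.1 - X e.2|)

section Aux

variable {V : Type*} [Fintype V] [Nonempty V]

lemma abs_sub_le_osc (X : V → ℝ) (u v : V) : |X u - X v| ≤ osc X :=
  Finset.le_sup' (f := fun p : V × V => |X p.1 - X p.2|) (Finset.mem_univ (u, v))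

lemma osc_nonneg (X : V → ℝ) : 0 ≤ osc X := by
  obtain ⟨v⟩ := ‹Nonempty V›
  simpa using abs_sub_le_osc X v v

lemma osc_le_one {X : V → ℝ} (h : ∀ v, X v ∈ Set.Icc (0:ℝ) 1) : osc X ≤ 1 := by
  refine Finset.sup'_le _ _ fun p _ => ?_
  have h1 := h p.1; have h2 := h p.2
  simp only [Set.mem_Icc] at h1 h2
  rw [abs_le]; constructor <;> linarith

lemma Pm_nonneg {r : V → V → ℝ} (hr : ∀ u v, 0 < r u v) (ω : V → V → Bool) (v u : V) :
    0 ≤ Pm r ω v u := by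
  unfold Pm
  apply div_nonneg
  · exact mul_nonneg (hr u v).le (by split <;> norm_num)
  · exact Finset.sum_nonneg fun w _ => mul_nonneg (hr w v).le (by split <;> norm_num)

lemma Pm_row_sum {r : V → V → ℝ} (hr : ∀ u v, 0 < r u v) {ω : V → V → Bool} {v : V}
    (hd : ω v v = true) : ∑ u, Pm r ω v u = 1 := by
  have hD : 0 < ∑ w : V, r w v * (if ω w v then (1:ℝ) else 0) := by
    refine Finset.sum_pos' (fun w _ => ?_) ⟨v, Finset.mem_univ v, ?_⟩
    · have := (hr w v).le; positivity
    · simp [hd, hr v v]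
  unfold Pm
  rw [← Finset.sum_div, div_self hD.ne']

/-- Auxiliary: the off-diagonal coupling sum for a pair. -/
noncomputable def gsum (P : V → V → ℝ) (u v : V) : ℝ :=
  ∑ w : V, ∑ z : V, min (P u w * P v z) (P u z * P v w)

lemma gsum_nonneg {P : V → V → ℝ} (hP : ∀ u w, 0 ≤ P u w) (u v : V) : 0 ≤ gsum P u v := by
  refine Finset.sum_nonneg fun w _ => Finset.sum_nonneg fun z _ => ?_
  exact le_min (mul_nonneg (hP u w) (hP v z)) (mul_nonneg (hP u z) (hP v w))

lemma gsum_le_one {P : V → V → ℝ} (hP : ∀ u w, 0 ≤ P u w) (hrow : ∀ u, ∑ w, P u w = 1)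
    (u v : V) : gsum P u v ≤ 1 := by
  have h : gsum P u v ≤ ∑ w : V, ∑ z : V, P u w * P v z := by
    refine Finset.sum_le_sum fun w _ => Finset.sum_le_sum fun z _ => min_le_left _ _
  calc gsum P u v ≤ ∑ w : V, ∑ z : V, P u w * P v z := h
    _ = 1 := by
        have h2 : ∀ w, ∑ z : V, P u w * P v z = P u w := fun w => by
          rw [← Finset.mul_sum, hrow v, mul_one]
        rw [Finset.sum_congr rfl fun w _ => h2 w]; exact hrow u

lemma ergCoeff_le_gsum {P : V → V → ℝ} (hP : ∀ u w, 0 ≤ P u w) {u v : V} (huv : u ≠ v) :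
    ergCoeff P ≤ gsum P u v := by
  refine csInf_le ⟨0, ?_⟩ ⟨u, v, huv, rfl⟩
  rintro s ⟨a, b, -, rfl⟩
  exact gsum_nonneg hP a b

lemma ergCoeff_nonneg {P : V → V → ℝ} (hP : ∀ u w, 0 ≤ P u w)
    (hcard : 2 ≤ Fintype.card V) : 0 ≤ ergCoeff P := by
  obtain ⟨a, b, hab⟩ := Fintype.exists_pair_of_one_lt_card (α := V) (by omega)
  refine le_csInf ⟨_, ⟨a, b, hab, rfl⟩⟩ ?_
  rintro s ⟨x, y, -, rfl⟩
  exact gsum_nonneg hP x y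

lemma ergCoeff_le_one {P : V → V → ℝ} (hP : ∀ u w, 0 ≤ P u w) (hrow : ∀ u, ∑ w, P u w = 1)
    (hcard : 2 ≤ Fintype.card V) : ergCoeff P ≤ 1 := by
  obtain ⟨a, b, hab⟩ := Fintype.exists_pair_of_one_lt_card (α := V) (by omega)
  exact (ergCoeff_le_gsum hP hab).trans (gsum_le_one hP hrow a b)

/-- Dobrushin-type contraction for the oscillation. -/
lemma dobrushin {P : V → V → ℝ} (hP : ∀ u w, 0 ≤ P u w) (hrow : ∀ u, ∑ w, P u w = 1)
    (hcard : 2 ≤ Fintype.card V) (X : V → ℝ) :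
    osc (fun v => ∑ u, P v u * X u) ≤ (1 - ergCoeff P) * osc X := by
  have hosc0 := osc_nonneg X
  have hγ1 := ergCoeff_le_one hP hrow hcard
  have key : ∀ u v : V, u ≠ v →
      (∑ w, P u w * X w) - (∑ w, P v w * X w) ≤ (1 - ergCoeff P) * osc X := by
    intro u v huv
    set m : V → V → ℝ := fun w z => min (P u w * P v z) (P u z * P v w) with hm
    have hmsym : ∀ w z, m w z = m z w := fun w z => min_comm _ _
    have hmle : ∀ w z, m w z ≤ P u w * P v z := fun w z => min_le_left _ _
    -- rewrite the difference as a double sum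
    have hdiff : (∑ w, P u w * X w) - (∑ w, P v w * X w)
        = ∑ w : V, ∑ z : V, (P u w * P v z) * (X w - X z) := by
      have inner : ∀ w, ∑ z : V, (P u w * P v z) * (X w - X z)
          = P u w * X w - P u w * (∑ z : V, P v z * X z) := by
        intro w
        have h1 : ∀ z, (P u w * P v z) * (X w - X z)
            = (P u w * X w) * P v z - P u w * (P v z * X z) := fun z => by ring
        rw [Finset.sum_congr rfl fun z _ => h1 z, Finset.sum_sub_distrib,
          ← Finset.mul_sum, ← Finset.mul_sum, hrow v, mul_one]
      rw [Finset.sum_congr rfl fun w _ => inner w, Finset.sum_sub_distrib,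
        ← Finset.sum_mul, hrow u, one_mul]
    -- the symmetric part vanishes
    have hS : ∑ w : V, ∑ z : V, m w z * (X w - X z) = 0 := by
      have h1 : ∑ w : V, ∑ z : V, m w z * (X w - X z)
          = ∑ z : V, ∑ w : V, m w z * (X w - X z) := Finset.sum_comm
      have h2 : ∑ z : V, ∑ w : V, m w z * (X w - X z)
          = -∑ w : V, ∑ z : V, m w z * (X w - X z) := by
        rw [← Finset.sum_neg_distrib]
        refine Finset.sum_congr rfl fun z _ => ?_
        rw [← Finset.sum_neg_distrib]
        refine Finset.sum_congr rfl fun w _ => ?_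
        rw [hmsym w z]; ring
      linarith [h1.trans h2]
    have hsplit : (∑ w, P u w * X w) - (∑ w, P v w * X w)
        = ∑ w : V, ∑ z : V, (P u w * P v z - m w z) * (X w - X z) := by
      rw [hdiff]
      have : ∑ w : V, ∑ z : V, (P u w * P v z - m w z) * (X w - X z)
          = (∑ w : V, ∑ z : V, (P u w * P v z) * (X w - X z))
            - ∑ w : V, ∑ z : V, m w z * (X w - X z) := by
        simp_rw [← Finset.sum_sub_distrib]
        refine Finset.sum_congr rfl fun w _ => Finset.sum_congr rfl fun z _ => by ring
      rw [this, hS, sub_zero]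
    rw [hsplit]
    have hbound : ∑ w : V, ∑ z : V, (P u w * P v z - m w z) * (X w - X z)
        ≤ ∑ w : V, ∑ z : V, (P u w * P v z - m w z) * osc X := by
      refine Finset.sum_le_sum fun w _ => Finset.sum_le_sum fun z _ => ?_
      refine mul_le_mul_of_nonneg_left ?_ (by linarith [hmle w z])
      exact (le_abs_self _).trans (abs_sub_le_osc X w z)
    refine hbound.trans ?_
    have hsum1 : ∑ w : V, ∑ z : V, P u w * P v z = 1 := by
      have h2 : ∀ w, ∑ z : V, P u w * P v z = P u w := fun w => by
        rw [← Finset.mul_sum, hrow v, mul_one]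
      rw [Finset.sum_congr rfl fun w _ => h2 w]; exact hrow u
    have hfin : ∑ w : V, ∑ z : V, (P u w * P v z - m w z) * osc X
        = (1 - gsum P u v) * osc X := by
      have inner2 : ∀ w, ∑ z : V, (P u w * P v z - m w z) * osc X
          = (∑ z : V, (P u w * P v z - m w z)) * osc X :=
        fun w => (Finset.sum_mul _ _ _).symm
      rw [Finset.sum_congr rfl fun w _ => inner2 w, ← Finset.sum_mul]
      congr 1
      have h3 : ∀ w, ∑ z : V, (P u w * P v z - m w z)
          = (∑ z : V, P u w * P v z) - ∑ z : V, m w z :=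
        fun w => Finset.sum_sub_distrib _ _
      rw [Finset.sum_congr rfl fun w _ => h3 w, Finset.sum_sub_distrib, hsum1]
      rfl
    rw [hfin]
    have := ergCoeff_le_gsum hP huv
    nlinarith
  refine Finset.sup'_le _ _ fun q _ => ?_
  rcases eq_or_ne q.1 q.2 with h | h
  · rw [h]; simp; nlinarith
  · rw [abs_sub_le_iff]
    exact ⟨key q.1 q.2 h, key q.2 q.1 h.symm⟩

end Aux

theorem stmt12 {V : Type*} [Fintype V] [DecidableEq V] [Nonempty V]
    (hcard : 2 ≤ Fintype.card V)
    (r : V → V → ℝ) (hr : ∀ u v, 0 < r u v)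
    (p : ℝ → ℝ) (hp : AntitoneOn p (Set.Icc 0 1)) (hp0 : p 0 = 1)
    (hpr : ∀ x ∈ Set.Icc (0:ℝ) 1, p x ∈ Set.Icc (0:ℝ) 1)
    {A : Type*} {m0 : MeasurableSpace A} (μ : Measure A) [IsProbabilityMeasure μ]
    (ℱ : Filtration ℕ m0)
    (X : ℕ → A → V → ℝ) (ω : ℕ → A → V → V → Bool)
    (hXadapt : ∀ t v, StronglyMeasurable[ℱ t] fun a => X t a v)
    (hωmeas : ∀ t u v, Measurable[ℱ (t + 1)] fun a => ω t a u v)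
    (hdiag : ∀ t a u, ω t a u u = true)
    (hX0 : ∀ a v, X 0 a v ∈ Set.Icc (0:ℝ) 1)
    (hev : ∀ t a v, X (t + 1) a v = ∑ u, Pm r (ω t a) v u * X t a u)
    (hlaw : ∀ t (φ : (V → V → Bool) → ℝ),
      μ[fun a => φ (ω t a)|ℱ t] =ᵐ[μ]
        fun a => ∑ ω' : V → V → Bool, PiK p (X t a) ω' * φ ω') :
    (∀ t, μ[fun a => osc (X (t + 1) a)|ℱ t] ≤ᵐ[μ]
        fun a => (1 - (μ[fun a => ergCoeff (Pm r (ω t a))|ℱ t]) a) * osc (X t a)) ∧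
    (∀ t, μ[fun a => osc (X (t + 1) a)|ℱ t] ≤ᵐ[μ] fun a => osc (X t a)) ∧
    Supermartingale (fun t a => osc (X t a)) ℱ μ ∧
    ∃ L : A → ℝ, ∀ᵐ a ∂μ, Tendsto (fun t => osc (X t a)) atTop (nhds (L a)) := by
  -- basic facts about the transition matrices
  have hPnn : ∀ t a v u, 0 ≤ Pm r (ω t a) v u := fun t a v u => Pm_nonneg hr _ _ _
  have hProw : ∀ t a v, ∑ u, Pm r (ω t a) v u = 1 := fun t a v => Pm_row_sum hr (hdiag t a v)
  -- X stays in [0,1]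
  have hXrange : ∀ t a v, X t a v ∈ Set.Icc (0:ℝ) 1 := by
    intro t
    induction t with
    | zero => exact hX0
    | succ t ih =>
      intro a v
      rw [hev t a v]
      constructor
      · exact Finset.sum_nonneg fun u _ => mul_nonneg (hPnn t a v u) (ih a u).1
      · calc ∑ u, Pm r (ω t a) v u * X t a u ≤ ∑ u, Pm r (ω t a) v u := by
              refine Finset.sum_le_sum fun u _ => ?_
              nlinarith [hPnn t a v u, (ih a u).1, (ih a u).2]
          _ = 1 := hProw t a v
  -- oscillation bounds
  have hWnn : ∀ t a, 0 ≤ osc (X t a) := fun t a => osc_nonneg _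
  have hWle : ∀ t a, osc (X t a) ≤ 1 := fun t a => osc_le_one (hXrange t a)
  -- gamma bounds
  have hγnn : ∀ t a, 0 ≤ ergCoeff (Pm r (ω t a)) :=
    fun t a => ergCoeff_nonneg (hPnn t a) hcard
  have hγ1 : ∀ t a, ergCoeff (Pm r (ω t a)) ≤ 1 :=
    fun t a => ergCoeff_le_one (hPnn t a) (hProw t a) hcard
  -- pointwise Dobrushin contraction
  have hkey : ∀ t a, osc (X (t + 1) a) ≤ (1 - ergCoeff (Pm r (ω t a))) * osc (X t a) := by
    intro t a
    have := dobrushin (hPnn t a) (hProw t a) hcard (X t a)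
    have he : (fun v => ∑ u, Pm r (ω t a) v u * X t a u) = X (t + 1) a := by
      funext v; exact (hev t a v).symm
    rwa [he] at this
  have hkey2 : ∀ t a, osc (X (t + 1) a) ≤ osc (X t a) := by
    intro t a
    refine (hkey t a).trans ?_
    nlinarith [hγnn t a, hWnn t a]
  -- measurability of oscillation
  have hWmeas : ∀ t, StronglyMeasurable[ℱ t] fun a => osc (X t a) := by
    intro t
    letI : MeasurableSpace A := ℱ t
    have : (fun a => osc (X t a))
        = Finset.univ.sup' Finset.univ_nonempty
            (fun q : V × V => fun a => |X t a q.1 - X t a q.2|) := by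
      funext a
      rw [Finset.sup'_apply]
      rfl
    rw [this]
    refine (Finset.measurable_sup' _ fun q _ => ?_).stronglyMeasurable
    exact (((hXadapt t q.1).measurable.sub (hXadapt t q.2).measurable)).abs
  -- measurability of gamma
  have hγmeas : ∀ t, Measurable[ℱ (t + 1)] fun a => ergCoeff (Pm r (ω t a)) := by
    intro t
    letI : MeasurableSpace A := ℱ (t + 1)
    have hωm : Measurable[ℱ (t + 1)] fun a => ω t a := by
      refine measurable_pi_lambda _ fun u => measurable_pi_lambda _ fun v => hωmeas t u v
    exact (measurable_of_countable (fun w : V → V → Bool => ergCoeff (Pm r w))).comp hωm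
  -- integrability helpers
  have hbdd_int : ∀ (f : A → ℝ), AEStronglyMeasurable f μ → (∀ a, |f a| ≤ 1) →
      Integrable f μ := fun f hm hb =>
    (integrable_const (1:ℝ)).mono' hm (ae_of_all _ fun a => by simpa using hb a)
  have hWint : ∀ t, Integrable (fun a => osc (X t a)) μ := by
    intro t
    refine hbdd_int _ (((hWmeas t).mono (ℱ.le t)).aestronglyMeasurable) fun a => ?_
    rw [abs_le]; exact ⟨by linarith [hWnn t a], hWle t a⟩
  have hγint : ∀ t, Integrable (fun a => ergCoeff (Pm r (ω t a))) μ := by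
    intro t
    refine hbdd_int _ (((hγmeas t).mono (ℱ.le (t + 1)) le_rfl).aestronglyMeasurable) fun a => ?_
    rw [abs_le]; exact ⟨by linarith [hγnn t a], hγ1 t a⟩
  have hgint : ∀ t, Integrable (fun a =>
      osc (X t a) * (1 - ergCoeff (Pm r (ω t a)))) μ := by
    intro t
    refine hbdd_int _ ?_ fun a => ?_
    · exact (((hWmeas t).mono (ℱ.le t)).aestronglyMeasurable).mul
        ((aestronglyMeasurable_const).sub
          (((hγmeas t).mono (ℱ.le (t + 1)) le_rfl).aestronglyMeasurable))
    · rw [abs_le]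
      constructor <;> nlinarith [hWnn t a, hWle t a, hγnn t a, hγ1 t a]
  -- Statement 1
  have stmt1 : ∀ t, μ[fun a => osc (X (t + 1) a)|ℱ t] ≤ᵐ[μ]
      fun a => (1 - (μ[fun a => ergCoeff (Pm r (ω t a))|ℱ t]) a) * osc (X t a) := by
    intro t
    have hmono : μ[fun a => osc (X (t + 1) a)|ℱ t]
        ≤ᵐ[μ] μ[fun a => osc (X t a) * (1 - ergCoeff (Pm r (ω t a)))|ℱ t] := by
      refine condExp_mono (hWint (t + 1)) (hgint t) (ae_of_all _ fun a => ?_)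
      calc osc (X (t + 1) a) ≤ (1 - ergCoeff (Pm r (ω t a))) * osc (X t a) := hkey t a
        _ = osc (X t a) * (1 - ergCoeff (Pm r (ω t a))) := mul_comm _ _
    have hpull : μ[(fun a => osc (X t a)) * (fun a => 1 - ergCoeff (Pm r (ω t a)))|ℱ t]
        =ᵐ[μ] (fun a => osc (X t a)) * μ[fun a => 1 - ergCoeff (Pm r (ω t a))|ℱ t] := by
      refine condExp_mul_of_stronglyMeasurable_left (hWmeas t) ?_ ?_
      · exact hgint t
      · exact (integrable_const (1:ℝ)).sub (hγint t)
    have hone : μ[fun a => 1 - ergCoeff (Pm r (ω t a))|ℱ t]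
        =ᵐ[μ] fun a => 1 - (μ[fun a => ergCoeff (Pm r (ω t a))|ℱ t]) a := by
      have h1 : (fun a : A => 1 - ergCoeff (Pm r (ω t a)))
          = (fun _ : A => (1:ℝ)) - fun a => ergCoeff (Pm r (ω t a)) := rfl
      rw [h1]
      refine (condExp_sub (integrable_const 1) (hγint t) _).trans ?_
      rw [condExp_const (ℱ.le t)]
      exact Filter.Eventually.of_forall fun a => rfl
    calc μ[fun a => osc (X (t + 1) a)|ℱ t]
        ≤ᵐ[μ] μ[(fun a => osc (X t a)) * (fun a => 1 - ergCoeff (Pm r (ω t a)))|ℱ t] := hmono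
      _ =ᵐ[μ] (fun a => osc (X t a)) * μ[fun a => 1 - ergCoeff (Pm r (ω t a))|ℱ t] := hpull
      _ =ᵐ[μ] fun a => (1 - (μ[fun a => ergCoeff (Pm r (ω t a))|ℱ t]) a) * osc (X t a) := by
          filter_upwards [hone] with a ha
          simp only [Pi.mul_apply, ha]
          ring
  -- Statement 2
  have stmt2 : ∀ t, μ[fun a => osc (X (t + 1) a)|ℱ t] ≤ᵐ[μ] fun a => osc (X t a) := by
    intro t
    have hmono : μ[fun a => osc (X (t + 1) a)|ℱ t] ≤ᵐ[μ] μ[fun a => osc (X t a)|ℱ t] :=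
      condExp_mono (hWint (t + 1)) (hWint t) (ae_of_all _ fun a => hkey2 t a)
    have heq : μ[fun a => osc (X t a)|ℱ t] = fun a => osc (X t a) :=
      condExp_of_stronglyMeasurable (ℱ.le t) (hWmeas t) (hWint t)
    rwa [heq] at hmono
  -- Statement 3
  have stmt3 : Supermartingale (fun t a => osc (X t a)) ℱ μ :=
    supermartingale_nat (fun t => hWmeas t) hWint stmt2
  refine ⟨stmt1, stmt2, stmt3, ?_⟩
  -- Statement 4: a.s. convergence
  have hsub : Submartingale (fun t a => -osc (X t a)) ℱ μ := by
    have := stmt3.neg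
    exact this
  have hbdd : ∀ n, eLpNorm (fun a => -osc (X n a)) 1 μ ≤ (1 : NNReal) := by
    intro n
    refine (eLpNorm_le_of_ae_bound (C := 1) (ae_of_all _ fun a => ?_)).trans ?_
    · rw [Real.norm_eq_abs, abs_neg, abs_le]
      exact ⟨by linarith [hWnn n a], hWle n a⟩
    · simp
  have hconv := hsub.exists_ae_tendsto_of_bdd hbdd
  refine ⟨fun a => limUnder atTop (fun t => osc (X t a)), ?_⟩
  filter_upwards [hconv] with a ⟨c, hc⟩
  have hc' : Tendsto (fun t => osc (X t a)) atTop (nhds (-c)) := by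
    have := hc.neg
    simpa using this
  rwa [hc'.limUnder_eq]
end
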